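/- arXiv:2104.08996 — 2 statements merged into one kernel-verified Lean document; each statement's English description precedes it below -/
import Mathlib

section
/- Let α > 1 and let F be the truncated derivative of the double-well potential defined piecewise by F(c) = ((3α²−1)/4) c − (α³/4 + 3α²/8 − 1/8) for c > (1+α)/2, F(c) = (c² − (3/2)c + 1/2) c for (1−α)/2 ≤ c ≤ (1+α)/2, and F(c) = ((3α²−1)/4) c + (α³/4 − 3α²/8 + 1/8) for c < (1−α)/2. Then for all x ≠ y, −1/4 ≤ (F(x) − F(y))/(x − y) ≤ L, where L = (3α² − 1)/4. -/
/-!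
Write `a = (1 - α)/2`, `b = (1 + α)/2` and `G c = (c² - 3c/2 + 1/2) c`. With `s = u - 1/2`,
`t = v - 1/2` one has `G v - G u = (v - u) (s² + st + t² - 1/4)`, and on `[a, b]`, where
`|s|, |t| ≤ α/2`, the factor `s² + st + t² - 1/4` lies in `[-1/4, (3α² - 1)/4]`.
The truncation is `F c = G (clamp c) + L (c - clamp c)` with `clamp c = max a (min b c)`, so an
increment of `F` splits into an increment of `G` over `[a, b]` and an increment of slope `L`
outside it; both have slopes in `[-1/4, L]`.
-/

open Set

noncomputable def extendBySlope (g : ℝ → ℝ) (a b M c : ℝ) : ℝ :=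
  g (max a (min b c)) + M * (c - max a (min b c))

lemma max_min_mem_Icc {a b : ℝ} (hab : a ≤ b) (c : ℝ) : max a (min b c) ∈ Icc a b :=
  ⟨le_max_left _ _, max_le hab (min_le_left _ _)⟩

lemma max_min_sub_max_min_mem_Icc {a b x y : ℝ} (hxy : x ≤ y) :
    max a (min b y) - max a (min b x) ∈ Icc 0 (y - x) := by
  constructor
  · exact sub_nonneg.2 (max_le_max le_rfl (min_le_min le_rfl hxy))
  · simp only [max_def, min_def]
    split_ifs <;> linarith

lemma extendBySlope_sub_mem_Icc {g : ℝ → ℝ} {a b m M x y : ℝ} (hab : a ≤ b) (hmM : m ≤ M)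
    (hg : ∀ u ∈ Icc a b, ∀ v ∈ Icc a b, u ≤ v →
      g v - g u ∈ Icc (m * (v - u)) (M * (v - u)))
    (hxy : x ≤ y) :
    extendBySlope g a b M y - extendBySlope g a b M x ∈ Icc (m * (y - x)) (M * (y - x)) := by
  set u := max a (min b x)
  set v := max a (min b y)
  obtain ⟨hvu_nonneg, hvu_le⟩ := max_min_sub_max_min_mem_Icc (a := a) (b := b) hxy
  obtain ⟨hlow, hupp⟩ := hg u (max_min_mem_Icc hab x) v (max_min_mem_Icc hab y) (by linarith)
  have hrest : m * (y - x - (v - u)) ≤ M * (y - x - (v - u)) :=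
    mul_le_mul_of_nonneg_right hmM (by linarith)
  have hsplit : extendBySlope g a b M y - extendBySlope g a b M x =
      (g v - g u) + M * (y - x - (v - u)) := by
    simp only [extendBySlope, u, v]; ring
  rw [hsplit]
  constructor <;> linarith

lemma slope_mem_Icc_of_sub_mem_Icc {f : ℝ → ℝ} {m M : ℝ}
    (hf : ∀ x y, x < y → f y - f x ∈ Icc (m * (y - x)) (M * (y - x))) {x y : ℝ}
    (hxy : x < y) : slope f x y ∈ Icc m M := by
  obtain ⟨hlow, hupp⟩ := hf x y hxy
  have hpos : 0 < y - x := sub_pos.2 hxy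
  rw [slope_def_field]
  exact ⟨(le_div_iff₀ hpos).2 hlow, (div_le_iff₀ hpos).2 hupp⟩

noncomputable def doubleWellDeriv (c : ℝ) : ℝ := (c ^ 2 - (3 / 2) * c + 1 / 2) * c

lemma doubleWellDeriv_sub (u v : ℝ) :
    doubleWellDeriv v - doubleWellDeriv u =
      (v - u) * ((u - 1 / 2) ^ 2 + (u - 1 / 2) * (v - 1 / 2) + (v - 1 / 2) ^ 2 - 1 / 4) := by
  unfold doubleWellDeriv; ring

lemma doubleWellDeriv_sub_mem_Icc {α u v : ℝ} (hu : u ∈ Icc ((1 - α) / 2) ((1 + α) / 2))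
    (hv : v ∈ Icc ((1 - α) / 2) ((1 + α) / 2)) (huv : u ≤ v) :
    doubleWellDeriv v - doubleWellDeriv u ∈
      Icc (-(1 / 4) * (v - u)) ((3 * α ^ 2 - 1) / 4 * (v - u)) := by
  obtain ⟨hu₁, hu₂⟩ := hu
  obtain ⟨hv₁, hv₂⟩ := hv
  have hs : (u - 1 / 2) ^ 2 ≤ α ^ 2 / 4 := by
    nlinarith [mul_nonneg (sub_nonneg.2 hu₁) (sub_nonneg.2 hu₂)]
  have ht : (v - 1 / 2) ^ 2 ≤ α ^ 2 / 4 := by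
    nlinarith [mul_nonneg (sub_nonneg.2 hv₁) (sub_nonneg.2 hv₂)]
  rw [doubleWellDeriv_sub]
  set s := u - 1 / 2
  set t := v - 1 / 2
  have hq_nonneg : 0 ≤ s ^ 2 + s * t + t ^ 2 := by nlinarith [sq_nonneg (s + t)]
  have hq_le : s ^ 2 + s * t + t ^ 2 ≤ 3 * α ^ 2 / 4 := by nlinarith [sq_nonneg (s - t)]
  have hd : 0 ≤ v - u := sub_nonneg.2 huv
  constructor
  · nlinarith [mul_nonneg hd hq_nonneg]
  · nlinarith [mul_le_mul_of_nonneg_left hq_le hd]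

lemma eq_extendBySlope_doubleWellDeriv {α : ℝ} (hα : 0 ≤ α) {F : ℝ → ℝ}
    (hF : ∀ c : ℝ, F c =
      if c > (1 + α) / 2 then ((3 * α^2 - 1) / 4) * c - (α^3 / 4 + 3 * α^2 / 8 - 1/8)
      else if c < (1 - α) / 2 then ((3 * α^2 - 1) / 4) * c + (α^3 / 4 - 3 * α^2 / 8 + 1/8)
      else (c^2 - (3/2) * c + 1/2) * c) :
    F = extendBySlope doubleWellDeriv ((1 - α) / 2) ((1 + α) / 2) ((3 * α ^ 2 - 1) / 4) := by
  ext c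
  rw [hF c, extendBySlope]
  split_ifs with hb ha
  · rw [min_eq_left hb.le, max_eq_right (by linarith)]
    unfold doubleWellDeriv; ring
  · rw [min_eq_right (by linarith), max_eq_left ha.le]
    unfold doubleWellDeriv; ring
  · rw [min_eq_right (not_lt.1 hb), max_eq_right (not_lt.1 ha)]
    unfold doubleWellDeriv; ring

theorem truncated_potential_deriv_slope_bounds
    (α : ℝ) (hα : 1 < α) (F : ℝ → ℝ)
    (hF : ∀ c : ℝ, F c =
      if c > (1 + α) / 2 then ((3 * α^2 - 1) / 4) * c - (α^3 / 4 + 3 * α^2 / 8 - 1/8)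
      else if c < (1 - α) / 2 then ((3 * α^2 - 1) / 4) * c + (α^3 / 4 - 3 * α^2 / 8 + 1/8)
      else (c^2 - (3/2) * c + 1/2) * c) :
    ∀ x y : ℝ, x ≠ y →
      -(1/4) ≤ (F x - F y) / (x - y) ∧ (F x - F y) / (x - y) ≤ (3 * α^2 - 1) / 4 := by
  have hab : (1 - α) / 2 ≤ (1 + α) / 2 := by linarith
  have hmM : -(1 / 4) ≤ (3 * α ^ 2 - 1) / 4 := by nlinarith
  have hincr : ∀ x y, x < y →
      F y - F x ∈ Icc (-(1 / 4) * (y - x)) ((3 * α ^ 2 - 1) / 4 * (y - x)) := by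
    rw [eq_extendBySlope_doubleWellDeriv (by linarith) hF]
    exact fun x y hxy => extendBySlope_sub_mem_Icc hab hmM
      (fun u hu v hv huv => doubleWellDeriv_sub_mem_Icc hu hv huv) hxy.le
  intro x y hxy
  rw [← slope_def_field]
  rcases hxy.lt_or_gt with h | h
  · rw [slope_comm]
    exact slope_mem_Icc_of_sub_mem_Icc hincr h
  · exact slope_mem_Icc_of_sub_mem_Icc hincr h
end

section
/- With F and L = (3α²−1)/4 as above (α > 1 sufficiently large, say α ≥ 2), |F(x)| ≤ L |x| for all real x. -/
/-!
Write `L = (3α² - 1)/4`. The outer pieces of `F` are the tangent lines of the cubic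
`c (c - 1/2) (c - 1)` at `c = (1 ± α)/2`, so the slope of both is `L`; their intercepts
factor as `(α + 1)² (2α - 1)/8` and `(α - 1)² (2α + 1)/8`, which are nonnegative and
at most `2 L |c|` beyond the truncation points. On the middle interval
`F c = c ((c - 3/4)² - 1/16)`, and the quadratic factor lies in `[-1/16, (α² + α)/4]`
there, inside `[-L, L]` as soon as `α ≥ 1`.
-/

lemma abs_sub_le_self_of_nonneg_of_le_two_mul {a b : ℝ} (hb : 0 ≤ b) (hba : b ≤ 2 * a) :
    |a - b| ≤ a :=
  abs_le.2 ⟨by linarith, by linarith⟩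

section TruncatedPotential

variable {α c : ℝ}

lemma abs_cubic_le_of_mem_Icc (hα : 1 ≤ α) (hlo : (1 - α) / 2 ≤ c) (hhi : c ≤ (1 + α) / 2) :
    |c^3 - (3/2) * c^2 + (1/2) * c| ≤ ((3 * α^2 - 1) / 4) * |c| := by
  have hfactor : c^3 - (3/2) * c^2 + (1/2) * c = ((c - 3/4)^2 - 1/16) * c := by ring
  have hquad : |(c - 3/4)^2 - 1/16| ≤ (3 * α^2 - 1) / 4 := by
    refine abs_le.2 ⟨by nlinarith [sq_nonneg (c - 3/4)], ?_⟩
    -- `(c - 3/4)²` is largest at the left endpoint, where `(c - 3/4)² - 1/16 = (α² + α)/4`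
    nlinarith [mul_nonneg (sub_nonneg.2 hhi) (sub_nonneg.2 hlo)]
  rw [hfactor, abs_mul]
  exact mul_le_mul_of_nonneg_right hquad (abs_nonneg c)

lemma abs_upper_tangent_le (hα : 1 ≤ α) (hc : (1 + α) / 2 < c) :
    |((3 * α^2 - 1) / 4) * c - (α^3 / 4 + 3 * α^2 / 8 - 1/8)|
      ≤ ((3 * α^2 - 1) / 4) * |c| := by
  have hc₀ : 0 < c := by linarith
  have hintercept : α^3 / 4 + 3 * α^2 / 8 - 1/8 = (α + 1)^2 * (2 * α - 1) / 8 := by ring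
  rw [abs_of_pos hc₀, hintercept]
  apply abs_sub_le_self_of_nonneg_of_le_two_mul
  · have : 0 ≤ 2 * α - 1 := by linarith
    positivity
  · nlinarith [mul_le_mul_of_nonneg_left hc.le (by nlinarith : (0 : ℝ) ≤ 3 * α^2 - 1)]

lemma abs_lower_tangent_le (hα : 1 ≤ α) (hc : c < (1 - α) / 2) :
    |((3 * α^2 - 1) / 4) * c + (α^3 / 4 - 3 * α^2 / 8 + 1/8)|
      ≤ ((3 * α^2 - 1) / 4) * |c| := by
  have hc₀ : c < 0 := by linarith
  have hintercept : α^3 / 4 - 3 * α^2 / 8 + 1/8 = (α - 1)^2 * (2 * α + 1) / 8 := by ring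
  have hreflect : ((3 * α^2 - 1) / 4) * c + (α - 1)^2 * (2 * α + 1) / 8
      = -(((3 * α^2 - 1) / 4) * -c - (α - 1)^2 * (2 * α + 1) / 8) := by ring
  rw [abs_of_neg hc₀, hintercept, hreflect, abs_neg]
  apply abs_sub_le_self_of_nonneg_of_le_two_mul
  · have : 0 ≤ 2 * α + 1 := by linarith
    positivity
  · nlinarith [mul_le_mul_of_nonneg_left hc.le (by nlinarith : (0 : ℝ) ≤ 3 * α^2 - 1)]

end TruncatedPotential

theorem truncated_potential_deriv_growth
    (α : ℝ) (hα : 2 ≤ α) (F : ℝ → ℝ)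
    (hF : ∀ c : ℝ, F c =
      if c > (1 + α) / 2 then ((3 * α^2 - 1) / 4) * c - (α^3 / 4 + 3 * α^2 / 8 - 1/8)
      else if c < (1 - α) / 2 then ((3 * α^2 - 1) / 4) * c + (α^3 / 4 - 3 * α^2 / 8 + 1/8)
      else c^3 - (3/2) * c^2 + (1/2) * c) :
    ∀ x : ℝ, |F x| ≤ ((3 * α^2 - 1) / 4) * |x| := by
  intro x
  have hα₁ : 1 ≤ α := by linarith
  rw [hF x]
  split_ifs with hupper hlower
  · exact abs_upper_tangent_le hα₁ hupper
  · exact abs_lower_tangent_le hα₁ hlower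
  · exact abs_cubic_le_of_mem_Icc hα₁ (not_lt.1 hlower) (not_lt.1 hupper)
end
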